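/- For a finite crossed module X, the multiplicity μ_p of a simple object p in the vacuum object V_K of M(X) is nonzero if and only if the p-th row of the normalized S-matrix is collinear to the row of the tensor unit, and in that case μ_p = d_p (the categorical dimension of p). -/

import Mathlib

/-!
Call `A` of vacuum type if `∂X₂` acts trivially on it and its grading is supported on `ker ∂`.
A nonzero morphism from a simple `A` to `V_K` is injective, and `V_K` is of vacuum type, so `A` is
too; conversely, for `A` of vacuum type, `Hom(A, V_K)` is the dual of `A` (Frobenius reciprocity),
so `μ_A = d_A`. The trace of the double braiding on `A ⊗ B` is
`|X| S_{AB} = ∑_{m,n} ψ_A(m, ∂n) ψ_B(n, ∂m)`, which equals `d_A d_B` when `A` is of vacuum type.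

Conversely, suppose `|X| S_{AB} = α d_B` for every simple `B`. Both sides are additive in `B`, and
`M(X)` is semisimple in characteristic zero (averaging a projection over the grading and over
`X₁`), so the identity holds for every `B`. Probing with the trivial object gives `α = d_A`.
Probing with the permutation representation on `X₁` graded by `x ↦ n₀^x` gives
`|X₁| tr(K) = |X₁| d_A` for `n₀ = 1`, where `K = ∑_{∂m = 1} P(m)` is an idempotent, so `K = 1`;
then it gives `tr Q(∂n₀) = d_A` for all `n₀`, and since `Q(∂n₀)` has finite order this forces
`Q(∂n₀) = 1`.
-/

/-- A crossed module: groups `X₁`, `X₂`, a right action of `X₁` on `X₂` by group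
automorphisms (written `act m g` for `m^g`), and a boundary homomorphism
`δ : X₂ →* X₁` satisfying equivariance and the Peiffer identity. -/
structure CrossedModule (X₁ X₂ : Type) [Group X₁] [Group X₂] where
  act : X₂ → X₁ → X₂
  act_one : ∀ m : X₂, act m 1 = m
  act_mul : ∀ (m : X₂) (g h : X₁), act m (g * h) = act (act m g) h
  act_hom : ∀ (m n : X₂) (g : X₁), act (m * n) g = act m g * act n g
  δ : X₂ →* X₁
  equivariance : ∀ (m : X₂) (g : X₁), δ (act m g) = g⁻¹ * δ m * g
  peiffer : ∀ m n : X₂, act m (δ n) = n⁻¹ * m * n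

section Representations
open TensorProduct

variable {F : Type} [Field F] {X₁ X₂ : Type} [Group X₁] [Group X₂] [Fintype X₁] [Fintype X₂] [DecidableEq X₂]

/-- A representation of the crossed module `X` on the `F`-vector space `V`:
an `X₂`-grading, encoded by the family of projections `P m` onto the graded
components, together with an `X₁`-action `Q` such that `P(m)Q(g) = Q(g)P(m^g)`.
These are the objects of the category `M(X)`. -/
structure XRep (F : Type) [Field F] {X₁ X₂ : Type} [Group X₁] [Group X₂] [Fintype X₂] [DecidableEq X₂]
    (X : CrossedModule X₁ X₂)
    (V : Type) [AddCommGroup V] [Module F V] where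
  P : X₂ → (V →ₗ[F] V)
  Q : X₁ → (V →ₗ[F] V)
  P_orth : ∀ m n : X₂, (P m) ∘ₗ (P n) = if m = n then P m else 0
  P_total : (∑ m : X₂, P m) = LinearMap.id
  Q_one : Q 1 = LinearMap.id
  Q_mul : ∀ g h : X₁, Q (g * h) = Q g ∘ₗ Q h
  PQ_compat : ∀ (m : X₂) (g : X₁), (P m) ∘ₗ (Q g) = (Q g) ∘ₗ (P (X.act m g))

variable {X : CrossedModule X₁ X₂}
variable {U V W U' V' W' : Type}
  [AddCommGroup U] [Module F U] [AddCommGroup V] [Module F V] [AddCommGroup W] [Module F W]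
  [AddCommGroup U'] [Module F U'] [AddCommGroup V'] [Module F V'] [AddCommGroup W'] [Module F W']

/-- The grading of the tensor product: `(V ⊗ W)_m = ⊕_{nl = m} V_n ⊗ W_l`. -/
noncomputable def tensorP (A : XRep F X V) (B : XRep F X W) (m : X₂) :
    (V ⊗[F] W) →ₗ[F] (V ⊗[F] W) :=
  ∑ n : X₂, TensorProduct.map (A.P n) (B.P (n⁻¹ * m))

/-- The diagonal `X₁`-action on the tensor product. -/
noncomputable def tensorQ (A : XRep F X V) (B : XRep F X W) (g : X₁) :
    (V ⊗[F] W) →ₗ[F] (V ⊗[F] W) :=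
  TensorProduct.map (A.Q g) (B.Q g)

/-- The braiding `R_{V,W}(v ⊗ w) = ∑_{m ∈ X₂} Q_W(∂m) w ⊗ P_V(m) v`, written in terms
of the grading data `PA` on `V` and the action data `QB` on `W`. -/
noncomputable def braidAux (X : CrossedModule X₁ X₂)
    (PA : X₂ → (V →ₗ[F] V)) (QB : X₁ → (W →ₗ[F] W)) :
    (V ⊗[F] W) →ₗ[F] (W ⊗[F] V) :=
  ∑ m : X₂, (TensorProduct.map (QB (X.δ m)) (PA m)) ∘ₗ
    (TensorProduct.comm F V W).toLinearMap

/-- The braiding `R_{V,W}` between two crossed-module representations. -/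
noncomputable def braid (A : XRep F X V) (B : XRep F X W) :
    (V ⊗[F] W) →ₗ[F] (W ⊗[F] V) :=
  braidAux X A.P B.Q

/-- Morphisms in `M(X)`: linear maps compatible with the grading and the action. -/
def IsXRepHom (A : XRep F X V) (B : XRep F X W) (f : V →ₗ[F] W) : Prop :=
  (∀ m : X₂, f ∘ₗ A.P m = B.P m ∘ₗ f) ∧ (∀ g : X₁, f ∘ₗ A.Q g = B.Q g ∘ₗ f)

end Representations

section Vacuum

variable (F : Type) [Field F] {X₁ X₂ : Type} [Group X₁] [Group X₂]
  [Fintype X₁] [Fintype X₂] [DecidableEq X₂]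
  (X : CrossedModule X₁ X₂) [X.δ.range.Normal]

/-- The underlying vector space `k[ker ∂] ⊗ k(coker ∂)` of the vacuum object,
realized as the space of `F`-valued functions on `(ker ∂) × (coker ∂)`;
the basis vector `x ⊗ δ_{Iy}` corresponds to the indicator function of `(x, Iy)`. -/
abbrev VacuumCarrier : Type := (X.δ.ker × (X₁ ⧸ X.δ.range)) → F

/-- The grading projections of the vacuum object,
`P(m)(x ⊗ δ_{Iy}) = δ(m^y, x) (x ⊗ δ_{Iy})`, defined via a choice of coset
representative. -/
noncomputable def vacuumP (m : X₂) : VacuumCarrier F X →ₗ[F] VacuumCarrier F X where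
  toFun f := fun p => if X.act m (Quotient.out p.2) = (p.1 : X₂) then f p else 0
  map_add' f g := by funext p; by_cases h : X.act m (Quotient.out p.2) = (p.1 : X₂) <;> simp [h]
  map_smul' c f := by funext p; by_cases h : X.act m (Quotient.out p.2) = (p.1 : X₂) <;> simp [h]

/-- The `X₁`-action of the vacuum object, `Q(g)(x ⊗ δ_{Iy}) = x ⊗ δ_{Igy}`. -/
def vacuumQ (g : X₁) : VacuumCarrier F X →ₗ[F] VacuumCarrier F X where
  toFun f := fun p => f (p.1, (QuotientGroup.mk g)⁻¹ * p.2)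
  map_add' f g := by funext p; simp
  map_smul' c f := by funext p; simp

end Vacuum

section Simple

variable {F : Type} [Field F] {X₁ X₂ : Type} [Group X₁] [Group X₂]
  [Fintype X₁] [Fintype X₂] [DecidableEq X₂] {X : CrossedModule X₁ X₂}
  {V : Type} [AddCommGroup V] [Module F V]

/-- A representation of a crossed module is simple if it is nonzero and has no
nontrivial invariant subspace. -/
def XRep.IsSimple (A : XRep F X V) : Prop :=
  Nontrivial V ∧
  ∀ S : Submodule F V,
    (∀ m : X₂, S.map (A.P m) ≤ S) → (∀ g : X₁, S.map (A.Q g) ≤ S) →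
    S = ⊥ ∨ S = ⊤

/-- `A` is a direct summand (retract) of the vacuum object `V_K`. -/
def IsVacuumSummand [X.δ.range.Normal] (A : XRep F X V) : Prop :=
  ∃ (ι : V →ₗ[F] VacuumCarrier F X) (π : VacuumCarrier F X →ₗ[F] V),
    (∀ m : X₂, ι ∘ₗ A.P m = vacuumP F X m ∘ₗ ι) ∧
    (∀ g : X₁, ι ∘ₗ A.Q g = vacuumQ F X g ∘ₗ ι) ∧
    (∀ m : X₂, π ∘ₗ vacuumP F X m = A.P m ∘ₗ π) ∧
    (∀ g : X₁, π ∘ₗ vacuumQ F X g = A.Q g ∘ₗ π) ∧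
    π ∘ₗ ι = LinearMap.id

end Simple

section HomVacuum

variable {F : Type} [Field F] {X₁ X₂ : Type} [Group X₁] [Group X₂]
  [Fintype X₁] [Fintype X₂] [DecidableEq X₂] {X : CrossedModule X₁ X₂}
  {V : Type} [AddCommGroup V] [Module F V]

/-- The space `Hom_{M(X)}(A, V_K)` of morphisms from `A` to the vacuum object,
as a linear subspace of the space of all linear maps; its dimension is the
multiplicity `μ_p` of `A = p` in `V_K`. -/
def homToVacuum [X.δ.range.Normal] (A : XRep F X V) :
    Submodule F (V →ₗ[F] VacuumCarrier F X) where
  carrier := {f | (∀ m : X₂, f ∘ₗ A.P m = vacuumP F X m ∘ₗ f) ∧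
    (∀ g : X₁, f ∘ₗ A.Q g = vacuumQ F X g ∘ₗ f)}
  add_mem' := by
    intro f g hf hg
    exact ⟨fun m => by rw [LinearMap.add_comp, LinearMap.comp_add, hf.1 m, hg.1 m],
      fun k => by rw [LinearMap.add_comp, LinearMap.comp_add, hf.2 k, hg.2 k]⟩
  zero_mem' := ⟨fun m => by simp, fun g => by simp⟩
  smul_mem' := by
    intro c f hf
    exact ⟨fun m => by rw [LinearMap.smul_comp, LinearMap.comp_smul, hf.1 m],
      fun k => by rw [LinearMap.smul_comp, LinearMap.comp_smul, hf.2 k]⟩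

end HomVacuum

namespace LinearMap

variable {R M N P ι : Type*} [CommSemiring R] [AddCommMonoid M] [Module R M]
  [AddCommMonoid N] [Module R N] [AddCommMonoid P] [Module R P]

theorem finsetSum_comp (s : Finset ι) (f : ι → N →ₗ[R] P) (g : M →ₗ[R] N) :
    (∑ i ∈ s, f i) ∘ₗ g = ∑ i ∈ s, f i ∘ₗ g := by
  ext; simp

theorem comp_finsetSum (s : Finset ι) (f : N →ₗ[R] P) (g : ι → M →ₗ[R] N) :
    f ∘ₗ (∑ i ∈ s, g i) = ∑ i ∈ s, f ∘ₗ g i := by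
  ext; simp

end LinearMap

section TraceCharZero

open LinearMap Module

variable {K V : Type*} [Field K] [CharZero K] [AddCommGroup V] [Module K V] [FiniteDimensional K V]

theorem IsIdempotentElem.eq_one_of_trace_eq_finrank {e : Module.End K V}
    (he : IsIdempotentElem e) (htr : trace K V e = finrank K V) : e = 1 := by
  have h := he.one_sub.eq_zero_of_trace_eq_zero (by rw [map_sub, trace_one, htr, sub_self])
  exact (sub_eq_zero.mp h).symm

/-- The mean `N⁻¹ ∑_{k < N} u ^ k` is an idempotent of full trace, hence `1`, and `u` fixes it. -/
theorem Module.End.eq_one_of_pow_eq_one_of_trace_pow {u : Module.End K V} {N : ℕ} (hN : N ≠ 0)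
    (huN : u ^ N = 1) (htr : ∀ k, trace K V (u ^ k) = finrank K V) : u = 1 := by
  set s := ∑ k ∈ Finset.range N, u ^ k
  have hus : u * s = s := by
    have h := mul_geom_sum u N
    rw [huN, sub_self, sub_mul, one_mul, sub_eq_zero] at h
    exact h
  have hpow : ∀ k, u ^ k * s = s := by
    intro k
    induction k with
    | zero => rw [pow_zero, one_mul]
    | succ k ih => rw [pow_succ, mul_assoc, hus, ih]
  have hN' : (N : K) ≠ 0 := Nat.cast_ne_zero.mpr hN
  set e := (N : K)⁻¹ • s
  have hss : s * s = (N : K) • s := by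
    rw [Finset.sum_mul, Finset.sum_congr rfl fun k _ => hpow k, Finset.sum_const,
      Finset.card_range, ← Nat.cast_smul_eq_nsmul K]
  have he : IsIdempotentElem e := by
    rw [IsIdempotentElem, smul_mul_smul_comm, hss, smul_smul, mul_assoc, inv_mul_cancel₀ hN',
      mul_one]
  have htre : trace K V e = finrank K V := by
    rw [map_smul, map_sum, Finset.sum_congr rfl fun k _ => htr k, Finset.sum_const,
      Finset.card_range, nsmul_eq_mul, smul_eq_mul, inv_mul_cancel_left₀ hN']
  have he1 := he.eq_one_of_trace_eq_finrank htre
  calc u = u * e := by rw [he1, mul_one]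
    _ = e := by rw [mul_smul_comm, hus]
    _ = 1 := he1

end TraceCharZero

namespace CrossedModule

variable {X₁ X₂ : Type} [Group X₁] [Group X₂] (X : CrossedModule X₁ X₂)

@[simp]
theorem act_act_inv (m : X₂) (g : X₁) : X.act (X.act m g) g⁻¹ = m := by
  rw [← X.act_mul, mul_inv_cancel, X.act_one]

@[simp]
theorem act_inv_act (m : X₂) (g : X₁) : X.act (X.act m g⁻¹) g = m := by
  rw [← X.act_mul, inv_mul_cancel, X.act_one]

theorem act_left_injective (g : X₁) : Function.Injective (X.act · g) :=
  Function.LeftInverse.injective (g := (X.act · g⁻¹)) (X.act_act_inv · g)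

@[simp]
theorem one_act (g : X₁) : X.act 1 g = 1 := by
  simpa using X.act_hom 1 1 g

theorem act_eq_self_of_mem_ker {x : X₂} (hx : x ∈ X.δ.ker) {g : X₁} (hg : g ∈ X.δ.range) :
    X.act x g = x := by
  obtain ⟨n, rfl⟩ := hg
  have hxn : n = x⁻¹ * n * x := by simpa [MonoidHom.mem_ker.mp hx, X.act_one] using X.peiffer n x
  rw [X.peiffer]
  nth_rw 2 [hxn]
  group

end CrossedModule

namespace XRep

open LinearMap Module

variable {F : Type} [Field F] {X₁ X₂ : Type} [Group X₁] [Group X₂] [Fintype X₂] [DecidableEq X₂]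
  {X : CrossedModule X₁ X₂} {V : Type} [AddCommGroup V] [Module F V] (A : XRep F X V)

def toRepresentation : Representation F X₁ V where
  toFun := A.Q
  map_one' := A.Q_one
  map_mul' := A.Q_mul

theorem Q_pow (g : X₁) (k : ℕ) : A.Q (g ^ k) = A.Q g ^ k :=
  map_pow A.toRepresentation g k

theorem Q_comp_Q_inv (g : X₁) : A.Q g ∘ₗ A.Q g⁻¹ = LinearMap.id := by
  rw [← A.Q_mul, mul_inv_cancel, A.Q_one]

theorem Q_inv_comp_Q (g : X₁) : A.Q g⁻¹ ∘ₗ A.Q g = LinearMap.id := by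
  rw [← A.Q_mul, inv_mul_cancel, A.Q_one]

theorem Q_comp_P (m : X₂) (g : X₁) : A.Q g ∘ₗ A.P m = A.P (X.act m g⁻¹) ∘ₗ A.Q g := by
  simpa using (A.PQ_compat (X.act m g⁻¹) g).symm

theorem P_comp_P_self (m : X₂) : A.P m ∘ₗ A.P m = A.P m := by
  rw [A.P_orth, if_pos rfl]

theorem sum_trace_P [FiniteDimensional F V] : ∑ m, trace F V (A.P m) = finrank F V := by
  rw [← map_sum, A.P_total, trace_id]

theorem trace_Q_conj [FiniteDimensional F V] (g x : X₁) :
    trace F V (A.Q (x⁻¹ * g * x)) = trace F V (A.Q g) := by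
  rw [A.Q_mul, A.Q_mul, trace_comp_comm', ← comp_assoc, Q_comp_Q_inv, id_comp]

noncomputable def character (m : X₂) (g : X₁) : F :=
  trace F V (A.P m ∘ₗ A.Q g)

theorem sum_character [FiniteDimensional F V] (g : X₁) :
    ∑ m, A.character m g = trace F V (A.Q g) := by
  simp only [character, ← map_sum, ← finsetSum_comp, A.P_total, id_comp]

/-- `|X|` times the entry `S_{AB}` of the `S`-matrix. -/
noncomputable def scaledS {W : Type} [AddCommGroup W] [Module F W] (B : XRep F X W) : F :=
  ∑ m, ∑ n, A.character m (X.δ n) * B.character n (X.δ m)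

end XRep

section Braiding

open LinearMap TensorProduct

variable {F : Type} [Field F] {X₁ X₂ : Type} [Group X₁] [Group X₂] [Fintype X₂] [DecidableEq X₂]
  {X : CrossedModule X₁ X₂} {V W : Type} [AddCommGroup V] [Module F V] [FiniteDimensional F V]
  [AddCommGroup W] [Module F W] [FiniteDimensional F W]

theorem trace_braidAux_comp_braidAux (A : XRep F X V) (B : XRep F X W) :
    trace F (V ⊗[F] W) (braidAux X B.P A.Q ∘ₗ braidAux X A.P B.Q) = A.scaledS B := by
  have hterm : ∀ m n : X₂,
      (map (A.Q (X.δ n)) (B.P n) ∘ₗ (TensorProduct.comm F W V).toLinearMap) ∘ₗ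
        (map (B.Q (X.δ m)) (A.P m) ∘ₗ (TensorProduct.comm F V W).toLinearMap) =
      map (A.Q (X.δ n) ∘ₗ A.P m) (B.P n ∘ₗ B.Q (X.δ m)) := by
    intro m n
    exact TensorProduct.ext' fun v w => by simp
  simp only [braidAux, finsetSum_comp, comp_finsetSum, hterm, map_sum, trace_tensorProduct',
    XRep.scaledS, XRep.character, trace_comp_comm' (A.Q _)]

end Braiding

section VacuumObject

variable {F : Type} [Field F] {X₁ X₂ : Type} [Group X₁] [Group X₂] {X : CrossedModule X₁ X₂}

theorem vacuumP_eq_zero [DecidableEq X₂] {m : X₂} (hm : X.δ m ≠ 1) : vacuumP F X m = 0 := by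
  ext f p
  have hne : X.act m (Quotient.out p.2) ≠ p.1 := by
    intro he
    have h := p.1.2
    rw [MonoidHom.mem_ker, ← he, X.equivariance, mul_assoc, inv_mul_eq_one] at h
    exact hm (by simpa using h.symm)
  simp [vacuumP, hne]

variable [X.δ.range.Normal]

theorem out_one_mem_range : Quotient.out (1 : X₁ ⧸ X.δ.range) ∈ X.δ.range :=
  (QuotientGroup.eq_one_iff _).mp (QuotientGroup.out_eq' 1)

theorem vacuumQ_δ (n : X₂) : vacuumQ F X (X.δ n) = LinearMap.id := by
  have h : (X.δ n : X₁ ⧸ X.δ.range) = 1 := (QuotientGroup.eq_one_iff _).mpr ⟨n, rfl⟩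
  ext f p
  simp [vacuumQ, h]

end VacuumObject

section VacuumType

open LinearMap Module

variable {F : Type} [Field F] {X₁ X₂ : Type} [Group X₁] [Group X₂] [Fintype X₂]
  [DecidableEq X₂] {X : CrossedModule X₁ X₂} {V : Type} [AddCommGroup V] [Module F V]

/-- `A` is a representation of `coker ∂` graded by `ker ∂`, like `V_K` itself. -/
structure XRep.IsVacuumType (A : XRep F X V) : Prop where
  Q_δ : ∀ n, A.Q (X.δ n) = LinearMap.id
  P_eq_zero : ∀ m, X.δ m ≠ 1 → A.P m = 0

namespace XRep.IsVacuumType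

variable {A : XRep F X V}

theorem Q_eq_of_mk_eq (hA : A.IsVacuumType) {g h : X₁} (hgh : (g : X₁ ⧸ X.δ.range) = h) :
    A.Q g = A.Q h := by
  obtain ⟨n, hn⟩ := QuotientGroup.eq.mp hgh
  rw [show h = g * X.δ n by rw [hn, mul_inv_cancel_left], A.Q_mul, hA.Q_δ, comp_id]

theorem sum_P_ker (hA : A.IsVacuumType) [DecidableEq X₁] :
    ∑ x : X.δ.ker, A.P x = LinearMap.id := by
  rw [← A.P_total, ← Fintype.sum_subtype_add_sum_subtype (· ∈ X.δ.ker) A.P,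
    Finset.sum_eq_zero fun (m : {m // m ∉ X.δ.ker}) _ => hA.P_eq_zero m m.2, add_zero]

theorem scaledS_eq (hA : A.IsVacuumType) [FiniteDimensional F V] {W : Type} [AddCommGroup W]
    [Module F W] [FiniteDimensional F W] (B : XRep F X W) :
    A.scaledS B = finrank F V * finrank F W := by
  have hterm : ∀ m n, A.character m (X.δ n) * B.character n (X.δ m) =
      trace F V (A.P m) * trace F W (B.P n) := by
    intro m n
    by_cases hm : X.δ m = 1
    · simp [character, hA.Q_δ, hm, B.Q_one]
    · simp [character, hA.P_eq_zero m hm]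
  simp only [scaledS, hterm, ← Finset.mul_sum, ← Finset.sum_mul, sum_trace_P]

end XRep.IsVacuumType

theorem XRep.IsSimple.injective_of_comp_eq {A : XRep F X V} (hA : A.IsSimple) {U : Type}
    [AddCommGroup U] [Module F U] (P' : X₂ → Module.End F U) (Q' : X₁ → Module.End F U)
    {f : V →ₗ[F] U} (hP : ∀ m, f ∘ₗ A.P m = P' m ∘ₗ f) (hQ : ∀ g, f ∘ₗ A.Q g = Q' g ∘ₗ f)
    (hf : f ≠ 0) : Function.Injective f := by
  have hinv : ∀ (T : V →ₗ[F] V) (T' : Module.End F U), f ∘ₗ T = T' ∘ₗ f →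
      (ker f).map T ≤ ker f := by
    rintro T T' hT _ ⟨v, hv, rfl⟩
    rw [mem_ker, ← comp_apply, hT, comp_apply, mem_ker.mp hv, map_zero]
  rcases hA.2 (ker f) (fun m => hinv _ _ (hP m)) (fun g => hinv _ _ (hQ g)) with h | h
  · exact ker_eq_bot.mp h
  · exact absurd (ker_eq_top.mp h) hf

variable [X.δ.range.Normal]

theorem isVacuumType_of_homToVacuum_ne_bot {A : XRep F X V} (hA : A.IsSimple)
    (h : homToVacuum A ≠ ⊥) : A.IsVacuumType := by
  obtain ⟨f, ⟨hfP, hfQ⟩, hf⟩ := (Submodule.ne_bot_iff _).mp h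
  have hinj := hA.injective_of_comp_eq _ _ hfP hfQ hf
  refine ⟨fun n => ext fun v => hinj ?_, fun m hm => ext fun v => hinj ?_⟩
  · rw [← comp_apply, hfQ, vacuumQ_δ, id_comp, id_apply]
  · rw [← comp_apply, hfP, vacuumP_eq_zero hm, zero_comp, LinearMap.zero_apply,
      LinearMap.zero_apply, map_zero]

noncomputable def vacuumLift (A : XRep F X V) (ψ : Module.Dual F V) :
    V →ₗ[F] VacuumCarrier F X :=
  LinearMap.pi fun p => ψ ∘ₗ A.P p.1 ∘ₗ A.Q (Quotient.out p.2)⁻¹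

theorem vacuumLift_mem_homToVacuum {A : XRep F X V} (hA : A.IsVacuumType) (ψ : Module.Dual F V) :
    vacuumLift A ψ ∈ homToVacuum A := by
  refine ⟨fun m => ext fun v => funext fun ⟨x, c⟩ => ?_,
    fun g => ext fun v => funext fun ⟨x, c⟩ => ?_⟩
  · have hswap := congr($(A.Q_comp_P m (Quotient.out c)⁻¹) v)
    have horth := congr($(A.P_orth x (X.act m (Quotient.out c))) (A.Q (Quotient.out c)⁻¹ v))
    simp only [inv_inv, comp_apply] at hswap horth
    simp only [vacuumLift, vacuumP, comp_apply, pi_apply, coe_mk, AddHom.coe_mk, hswap, horth]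
    by_cases hc : X.act m (Quotient.out c) = x
    · simp [hc]
    · simp [hc, Ne.symm hc]
  · have hQ : A.Q ((Quotient.out c)⁻¹ * g) = A.Q (Quotient.out ((g : X₁ ⧸ X.δ.range)⁻¹ * c))⁻¹ :=
      hA.Q_eq_of_mk_eq (by simp)
    simp [vacuumLift, vacuumQ, ← hQ, A.Q_mul]

theorem vacuumLift_sum_proj_comp {A : XRep F X V} [DecidableEq X₁]
    (f : V →ₗ[F] VacuumCarrier F X) (hf : f ∈ homToVacuum A) :
    vacuumLift A (∑ x : X.δ.ker, LinearMap.proj (x, 1) ∘ₗ f) = f := by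
  ext v ⟨x, c⟩
  have hP : ∀ u (x' : X.δ.ker), f (A.P x u) (x', 1) = if x = x' then f u (x', 1) else 0 := by
    intro u x'
    rw [← comp_apply, hf.1, comp_apply]
    simp [vacuumP, X.act_eq_self_of_mem_ker x.2 out_one_mem_range]
  have hQ : f (A.Q (Quotient.out c)⁻¹ v) (x, 1) = f v (x, c) := by
    rw [← comp_apply, hf.2, comp_apply]
    simp [vacuumQ]
  simp [vacuumLift, hP, hQ]

/-- Frobenius reciprocity for `V_K`: a morphism into `V_K` is determined by its components at
the trivial coset of `coker ∂`. -/
noncomputable def homToVacuumEquivDual [DecidableEq X₁] {A : XRep F X V} (hA : A.IsVacuumType) :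
    homToVacuum A ≃ₗ[F] Module.Dual F V where
  toFun f := ∑ x : X.δ.ker, LinearMap.proj (x, 1) ∘ₗ f.1
  map_add' f g := by simp [comp_add, Finset.sum_add_distrib]
  map_smul' c f := by simp [comp_smul, Finset.smul_sum]
  invFun ψ := ⟨vacuumLift A ψ, vacuumLift_mem_homToVacuum hA ψ⟩
  left_inv f := Subtype.ext (vacuumLift_sum_proj_comp f.1 f.2)
  right_inv ψ := by
    ext v
    obtain ⟨n, hn⟩ := inv_mem (out_one_mem_range (X := X))
    simp [vacuumLift, ← hn, hA.Q_δ, ← map_sum, ← LinearMap.sum_apply, hA.sum_P_ker]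

theorem XRep.IsVacuumType.finrank_homToVacuum [FiniteDimensional F V] {A : XRep F X V}
    (hA : A.IsVacuumType) : finrank F (homToVacuum A) = finrank F V := by
  classical
  rw [(homToVacuumEquivDual hA).finrank_eq, Subspace.dual_finrank_eq]

end VacuumType

theorem LinearMap.trace_eq_trace_restrict_add_trace_restrict {K W : Type*} [Field K]
    [AddCommGroup W] [Module K W] [FiniteDimensional K W] {S T : Submodule K W}
    (hST : IsCompl S T) {f : W →ₗ[K] W} (hS : ∀ x ∈ S, f x ∈ S) (hT : ∀ x ∈ T, f x ∈ T) :
    trace K W f = trace K S (f.restrict hS) + trace K T (f.restrict hT) := by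
  have hint : DirectSum.IsInternal ![S, T] :=
    (DirectSum.isInternal_submodule_iff_isCompl _ zero_ne_one
      (by ext i; fin_cases i <;> simp)).mpr hST
  rw [trace_eq_sum_trace_restrict hint (f := f) (fun i => by fin_cases i; exacts [hS, hT]),
    Fin.sum_univ_two]
  rfl

namespace XRep

open LinearMap Module

variable {F : Type} [Field F] {X₁ X₂ : Type} [Group X₁] [Group X₂] [Fintype X₂] [DecidableEq X₂]
  {X : CrossedModule X₁ X₂} {W : Type} [AddCommGroup W] [Module F W] (B : XRep F X W)

structure IsInvariant (S : Submodule F W) : Prop where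
  P_mem : ∀ m, ∀ x ∈ S, B.P m x ∈ S
  Q_mem : ∀ g, ∀ x ∈ S, B.Q g x ∈ S

variable {B}

def restrict {S : Submodule F W} (hS : B.IsInvariant S) : XRep F X S where
  P m := (B.P m).restrict (hS.P_mem m)
  Q g := (B.Q g).restrict (hS.Q_mem g)
  P_orth m n := by
    ext x
    have h := congr($(B.P_orth m n) x.1)
    split_ifs at h ⊢ <;> simpa using h
  P_total := by
    ext x
    simpa using congr($(B.P_total) x.1)
  Q_one := by
    ext x
    simp [B.Q_one]
  Q_mul g h := by
    ext x
    simp [B.Q_mul]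
  PQ_compat m g := by
    ext x
    simpa using congr($(B.PQ_compat m g) x.1)

theorem character_eq_add_of_isCompl [FiniteDimensional F W] {S T : Submodule F W}
    (hST : IsCompl S T) (hS : B.IsInvariant S) (hT : B.IsInvariant T) (m : X₂) (g : X₁) :
    B.character m g = (B.restrict hS).character m g + (B.restrict hT).character m g := by
  rw [character, trace_eq_trace_restrict_add_trace_restrict hST
    (fun x hx => hS.P_mem m (B.Q g x) (hS.Q_mem g x hx))
    (fun x hx => hT.P_mem m (B.Q g x) (hT.Q_mem g x hx))]
  rfl

theorem scaledS_eq_add_of_isCompl {V : Type} [AddCommGroup V] [Module F V] (A : XRep F X V)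
    [FiniteDimensional F W] {S T : Submodule F W} (hST : IsCompl S T)
    (hS : B.IsInvariant S) (hT : B.IsInvariant T) :
    A.scaledS B = A.scaledS (B.restrict hS) + A.scaledS (B.restrict hT) := by
  simp only [scaledS, character_eq_add_of_isCompl hST hS hT, mul_add, Finset.sum_add_distrib]

variable (B)

noncomputable def gradedPart (f : Module.End F W) : Module.End F W :=
  ∑ m, B.P m ∘ₗ f ∘ₗ B.P m

noncomputable def average [Fintype X₁] (f : Module.End F W) : Module.End F W :=
  (Fintype.card X₁ : F)⁻¹ • ∑ g, B.Q g ∘ₗ f ∘ₗ B.Q g⁻¹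

theorem P_comp_gradedPart (f : Module.End F W) (n : X₂) :
    B.P n ∘ₗ B.gradedPart f = B.gradedPart f ∘ₗ B.P n := by
  simp only [gradedPart, comp_finsetSum, finsetSum_comp, ← comp_assoc, B.P_orth]
  simp only [comp_assoc, B.P_orth]
  have hl : ∀ m, (if n = m then B.P n else 0) ∘ₗ f ∘ₗ B.P m =
      if n = m then B.P n ∘ₗ f ∘ₗ B.P n else 0 := by
    intro m; split_ifs with h <;> simp [h]
  have hr : ∀ m, B.P m ∘ₗ f ∘ₗ (if m = n then B.P m else 0) =
      if m = n then B.P n ∘ₗ f ∘ₗ B.P n else 0 := by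
    intro m; split_ifs with h <;> simp [h]
  simp only [hl, hr, Finset.sum_ite_eq, Finset.sum_ite_eq', Finset.mem_univ, if_true]

theorem Q_comp_average [Fintype X₁] (f : Module.End F W) (h : X₁) :
    B.Q h ∘ₗ B.average f = B.average f ∘ₗ B.Q h := by
  have hg : ∀ g, B.Q h ∘ₗ B.Q g ∘ₗ f ∘ₗ B.Q g⁻¹ =
      (B.Q (h * g) ∘ₗ f ∘ₗ B.Q (h * g)⁻¹) ∘ₗ B.Q h := by
    intro g
    rw [mul_inv_rev, B.Q_mul, B.Q_mul]
    simp only [comp_assoc, B.Q_inv_comp_Q, comp_id]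
  simp only [average, comp_smul, smul_comp, comp_finsetSum, finsetSum_comp, hg]
  congr 1
  exact Fintype.sum_equiv (Equiv.mulLeft h) _ _ fun g => rfl

theorem P_comp_average [Fintype X₁] {f : Module.End F W} (hf : ∀ n, B.P n ∘ₗ f = f ∘ₗ B.P n)
    (n : X₂) : B.P n ∘ₗ B.average f = B.average f ∘ₗ B.P n := by
  have hg : ∀ g, B.P n ∘ₗ B.Q g ∘ₗ f ∘ₗ B.Q g⁻¹ = (B.Q g ∘ₗ f ∘ₗ B.Q g⁻¹) ∘ₗ B.P n := by
    intro g
    rw [← comp_assoc, B.PQ_compat, comp_assoc, ← comp_assoc _ f, hf]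
    simp only [comp_assoc, B.Q_comp_P n g⁻¹, inv_inv]
  simp only [average, comp_smul, smul_comp, comp_finsetSum, finsetSum_comp, hg]

theorem isProj_gradedPart {S : Submodule F W} (hS : B.IsInvariant S) {e : Module.End F W}
    (he : IsProj S e) : IsProj S (B.gradedPart e) where
  map_mem x := by
    rw [gradedPart, LinearMap.sum_apply]
    exact Submodule.sum_mem _ fun m _ => hS.P_mem m _ (he.map_mem _)
  map_id x hx := by
    have h : ∀ m, (B.P m ∘ₗ e ∘ₗ B.P m) x = B.P m x := fun m => by
      rw [comp_apply, comp_apply, he.map_id _ (hS.P_mem m x hx), ← comp_apply, B.P_comp_P_self]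
    rw [gradedPart, LinearMap.sum_apply, Finset.sum_congr rfl fun m _ => h m,
      ← LinearMap.sum_apply, B.P_total, id_apply]

theorem isProj_average [CharZero F] [Fintype X₁] {S : Submodule F W} (hS : B.IsInvariant S)
    {e : Module.End F W} (he : IsProj S e) : IsProj S (B.average e) where
  map_mem x := by
    rw [average, LinearMap.smul_apply, LinearMap.sum_apply]
    exact S.smul_mem _ (Submodule.sum_mem _ fun g _ => hS.Q_mem g _ (he.map_mem _))
  map_id x hx := by
    have h : ∀ g, (B.Q g ∘ₗ e ∘ₗ B.Q g⁻¹) x = x := fun g => by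
      rw [comp_apply, comp_apply, he.map_id _ (hS.Q_mem _ x hx), ← comp_apply, B.Q_comp_Q_inv,
        id_apply]
    rw [average, LinearMap.smul_apply, LinearMap.sum_apply, Finset.sum_congr rfl fun g _ => h g,
      Finset.sum_const, Finset.card_univ, ← Nat.cast_smul_eq_nsmul F, smul_smul,
      inv_mul_cancel₀ (Nat.cast_ne_zero.mpr Fintype.card_ne_zero), one_smul]

theorem exists_isCompl_isInvariant [CharZero F] [Fintype X₁] {S : Submodule F W}
    (hS : B.IsInvariant S) : ∃ T, IsCompl S T ∧ B.IsInvariant T := by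
  obtain ⟨S', hS'⟩ := S.exists_isCompl
  have he₀ : IsProj S (S.subtype ∘ₗ S.projectionOnto S' hS') :=
    ⟨fun x => (S.projectionOnto S' hS' x).2,
      fun x hx => by simp [Submodule.projectionOnto_apply_of_mem_left hS' hx]⟩
  set e := B.average (B.gradedPart (S.subtype ∘ₗ S.projectionOnto S' hS'))
  have he : IsProj S e := B.isProj_average hS (B.isProj_gradedPart hS he₀)
  have hker : ∀ T : Module.End F W, T ∘ₗ e = e ∘ₗ T → ∀ x ∈ ker e, T x ∈ ker e := by
    intro T hT x hx
    rw [mem_ker, ← comp_apply, ← hT, comp_apply, mem_ker.mp hx, map_zero]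
  exact ⟨ker e, he.isCompl, fun m => hker _ (B.P_comp_average (B.P_comp_gradedPart _) m),
    fun g => hker _ (B.Q_comp_average _ g)⟩

end XRep

open Module in
theorem XRep.scaledS_eq_mul_finrank {F : Type} [Field F] [CharZero F] {X₁ X₂ : Type}
    [Group X₁] [Group X₂] [Fintype X₁] [Fintype X₂] [DecidableEq X₂] {X : CrossedModule X₁ X₂}
    {V : Type} [AddCommGroup V] [Module F V] (A : XRep F X V) (α : F)
    (h : ∀ (U : Type) [AddCommGroup U] [Module F U] [FiniteDimensional F U] (C : XRep F X U),
      C.IsSimple → A.scaledS C = α * finrank F U)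
    {W : Type} [AddCommGroup W] [Module F W] [FiniteDimensional F W] (B : XRep F X W) :
    A.scaledS B = α * finrank F W := by
  induction hn : finrank F W using Nat.strong_induction_on generalizing W with
  | _ n ih =>
    by_cases hB : B.IsSimple
    · rw [← hn]; exact h W B hB
    by_cases hW : Nontrivial W
    · obtain ⟨S, hSP, hSQ, hbot, htop⟩ : ∃ S : Submodule F W, (∀ m, S.map (B.P m) ≤ S) ∧
          (∀ g, S.map (B.Q g) ≤ S) ∧ S ≠ ⊥ ∧ S ≠ ⊤ := by
        simpa [XRep.IsSimple, hW] using hB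
      have hS : B.IsInvariant S :=
        ⟨fun m x hx => hSP m (Submodule.mem_map_of_mem hx),
          fun g x hx => hSQ g (Submodule.mem_map_of_mem hx)⟩
      obtain ⟨T, hST, hT⟩ := B.exists_isCompl_isInvariant hS
      have hdim := Submodule.finrank_add_eq_of_isCompl hST
      have hSn : finrank F S < n := hn ▸ Submodule.finrank_lt htop
      have hS0 : finrank F S ≠ 0 := fun h0 => hbot (Submodule.finrank_eq_zero.mp h0)
      rw [XRep.scaledS_eq_add_of_isCompl A hST hS hT, ih _ hSn (B.restrict hS) rfl,
        ih _ (by omega) (B.restrict hT) rfl, ← mul_add, ← Nat.cast_add, hdim, hn]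
    · have : Subsingleton W := not_nontrivial_iff_subsingleton.mp hW
      simp [← hn, XRep.scaledS, XRep.character, Subsingleton.elim _ (0 : Module.End F W),
        finrank_eq_zero_of_subsingleton]

structure XSet {X₁ X₂ : Type} [Group X₁] [Group X₂] (X : CrossedModule X₁ X₂) (Ω : Type) where
  act : Ω → X₁ → Ω
  act_one : ∀ x, act x 1 = x
  act_mul : ∀ x g h, act x (g * h) = act (act x g) h
  grade : Ω → X₂
  grade_act : ∀ x g, grade (act x g) = X.act (grade x) g

namespace XSet

open LinearMap Module

variable {X₁ X₂ : Type} [Group X₁] [Group X₂] (X : CrossedModule X₁ X₂)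

def trivial : XSet X Unit where
  act _ _ := ()
  act_one _ := rfl
  act_mul _ _ _ := rfl
  grade _ := 1
  grade_act _ g := (X.one_act g).symm

def regular (n₀ : X₂) : XSet X X₁ where
  act := (· * ·)
  act_one := mul_one
  act_mul x g h := (mul_assoc x g h).symm
  grade := X.act n₀
  grade_act := X.act_mul n₀

variable {X} [Fintype X₂] [DecidableEq X₂] {Ω : Type} (S : XSet X Ω)

def linearize (F : Type) [Field F] : XRep F X (Ω → F) where
  P n :=
    { toFun := fun f x => if S.grade x = n then f x else 0
      map_add' := fun f f' => by ext x; by_cases h : S.grade x = n <;> simp [h]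
      map_smul' := fun c f => by ext x; by_cases h : S.grade x = n <;> simp [h] }
  Q g := funLeft F F (S.act · g)
  P_orth m n := by
    ext f x
    by_cases hm : S.grade x = m <;> by_cases hmn : m = n <;> simp_all
  P_total := by
    ext f x
    simp
  Q_one := by
    ext f x
    simp [S.act_one]
  Q_mul g h := by
    ext f x
    simp [S.act_mul]
  PQ_compat m g := by
    ext f x
    simp [S.grade_act, (X.act_left_injective g).eq_iff]

variable {F : Type} [Field F]

theorem character_linearize [Fintype Ω] [DecidableEq Ω] (n : X₂) (g : X₁) :
    (S.linearize F).character n g = ∑ x, if S.act x g = x ∧ S.grade x = n then 1 else 0 := by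
  rw [XRep.character, trace_eq_matrix_trace F (Pi.basisFun F Ω), Matrix.trace]
  refine Finset.sum_congr rfl fun x _ => ?_
  by_cases h₁ : S.act x g = x <;> by_cases h₂ : S.grade x = n <;>
    simp [linearize, h₁, h₂]

theorem scaledS_linearize [Fintype Ω] [DecidableEq Ω] {V : Type} [AddCommGroup V] [Module F V]
    (A : XRep F X V) : A.scaledS (S.linearize F) =
      ∑ m, ∑ x, if S.act x (X.δ m) = x then A.character m (X.δ (S.grade x)) else 0 := by
  simp only [XRep.scaledS, character_linearize, Finset.mul_sum]
  refine Finset.sum_congr rfl fun m _ => ?_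
  rw [Finset.sum_comm]
  refine Finset.sum_congr rfl fun x _ => ?_
  by_cases h : S.act x (X.δ m) = x <;> simp [h]

theorem isSimple_linearize_trivial : ((trivial X).linearize F).IsSimple := by
  have : IsSimpleModule F (Unit → F) := isSimpleModule_iff_finrank_eq_one.mpr (by simp)
  exact ⟨inferInstance, fun S _ _ => eq_bot_or_eq_top S⟩

end XSet

namespace XRep

open LinearMap Module

variable {F : Type} [Field F] {X₁ X₂ : Type} [Group X₁] [Group X₂] [Fintype X₂] [DecidableEq X₂]
  {X : CrossedModule X₁ X₂} {V : Type} [AddCommGroup V] [Module F V] (A : XRep F X V)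

theorem character_one (m : X₂) : A.character m 1 = trace F V (A.P m) := by
  rw [character, A.Q_one, comp_id]

theorem scaledS_linearize_trivial [FiniteDimensional F V] :
    A.scaledS ((XSet.trivial X).linearize F) = finrank F V := by
  simp [XSet.scaledS_linearize, XSet.trivial, character_one, sum_trace_P]

theorem scaledS_linearize_regular [Fintype X₁] [DecidableEq X₁] (n₀ : X₂) :
    A.scaledS ((XSet.regular X n₀).linearize F) =
      ∑ m, if X.δ m = 1 then ∑ x, A.character m (X.δ (X.act n₀ x)) else 0 := by
  rw [XSet.scaledS_linearize]
  refine Finset.sum_congr rfl fun m _ => ?_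
  by_cases h : X.δ m = 1 <;> simp [XSet.regular, h]

theorem P_eq_zero_of_scaledS_regular_one [CharZero F] [Fintype X₁] [DecidableEq X₁]
    [FiniteDimensional F V]
    (h : A.scaledS ((XSet.regular X 1).linearize F) = Fintype.card X₁ * finrank F V)
    (m : X₂) (hm : X.δ m ≠ 1) : A.P m = 0 := by
  set K : Module.End F V := ∑ m, if X.δ m = 1 then A.P m else 0
  have hPK : ∀ m, A.P m * K = if X.δ m = 1 then A.P m else 0 := by
    intro m
    rw [Finset.mul_sum, Finset.sum_eq_single m]
    · split_ifs <;> simp [Module.End.mul_eq_comp, A.P_comp_P_self]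
    · intro m' _ hm'
      split_ifs <;> simp [Module.End.mul_eq_comp, A.P_orth, Ne.symm hm']
    · simp
  have htrK : trace F V K = finrank F V := by
    rw [scaledS_linearize_regular] at h
    simp only [X.one_act, map_one, character_one, Finset.sum_const, Finset.card_univ,
      nsmul_eq_mul] at h
    refine mul_left_cancel₀ (Nat.cast_ne_zero.mpr Fintype.card_ne_zero :
      (Fintype.card X₁ : F) ≠ 0) ?_
    rw [← h, map_sum, Finset.mul_sum]
    exact Finset.sum_congr rfl fun m _ => by split_ifs <;> simp
  have hK : K = 1 := by
    refine IsIdempotentElem.eq_one_of_trace_eq_finrank ?_ htrK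
    rw [IsIdempotentElem]
    conv_lhs => rw [Finset.sum_mul]
    exact Finset.sum_congr rfl fun m _ => by split_ifs with hm <;> simp [hPK, hm]
  simpa [hm, hK] using hPK m

theorem Q_δ_eq_id_of_scaledS_regular [CharZero F] [Fintype X₁] [DecidableEq X₁]
    [FiniteDimensional F V] (hP : ∀ m, X.δ m ≠ 1 → A.P m = 0)
    (h : ∀ n₀, A.scaledS ((XSet.regular X n₀).linearize F) = Fintype.card X₁ * finrank F V)
    (n : X₂) : A.Q (X.δ n) = LinearMap.id := by
  have htr : ∀ n₀, trace F V (A.Q (X.δ n₀)) = finrank F V := by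
    intro n₀
    have hn := h n₀
    have hcard : (Fintype.card X₁ : F) ≠ 0 := Nat.cast_ne_zero.mpr Fintype.card_ne_zero
    have hsum : ∀ m, (if X.δ m = 1 then ∑ x, A.character m (X.δ (X.act n₀ x)) else 0) =
        ∑ x, A.character m (X.δ (X.act n₀ x)) := by
      intro m
      by_cases hm : X.δ m = 1
      · rw [if_pos hm]
      · simp [hm, character, hP m hm]
    rw [scaledS_linearize_regular, Finset.sum_congr rfl fun m _ => hsum m, Finset.sum_comm] at hn
    simp only [sum_character, X.equivariance, trace_Q_conj, Finset.sum_const, Finset.card_univ,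
      nsmul_eq_mul] at hn
    exact mul_left_cancel₀ hcard hn
  refine Module.End.eq_one_of_pow_eq_one_of_trace_pow (N := Fintype.card X₁)
    Fintype.card_ne_zero ?_ ?_
  · rw [← Q_pow, pow_card_eq_one, A.Q_one, Module.End.one_eq_id]
  · intro k
    rw [← Q_pow, ← map_pow, htr]

end XRep

theorem XRep.isVacuumType_of_scaledS_eq {F : Type} [Field F] [CharZero F] {X₁ X₂ : Type}
    [Group X₁] [Group X₂] [Fintype X₁] [Fintype X₂] [DecidableEq X₂] {X : CrossedModule X₁ X₂}
    {V : Type} [AddCommGroup V] [Module F V] [FiniteDimensional F V] (A : XRep F X V) (α : F)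
    (h : ∀ (U : Type) [AddCommGroup U] [Module F U] [FiniteDimensional F U] (C : XRep F X U),
      C.IsSimple → A.scaledS C = α * Module.finrank F U) :
    A.IsVacuumType := by
  classical
  have hα : α = Module.finrank F V := by
    simpa [A.scaledS_linearize_trivial] using
      (h _ ((XSet.trivial X).linearize F) XSet.isSimple_linearize_trivial).symm
  have hreg : ∀ n₀, A.scaledS ((XSet.regular X n₀).linearize F) =
      Fintype.card X₁ * Module.finrank F V := fun n₀ => by
    rw [A.scaledS_eq_mul_finrank α h, hα, Module.finrank_fintype_fun_eq_card, mul_comm]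
  have hP := A.P_eq_zero_of_scaledS_regular_one (hreg 1)
  exact ⟨A.Q_δ_eq_id_of_scaledS_regular hP hreg, hP⟩

theorem multiplicity_iff_collinear_general {F : Type} [Field F] [CharZero F]
    {X₁ X₂ : Type} [Group X₁] [Group X₂] [Fintype X₁] [Fintype X₂] [DecidableEq X₂]
    {X : CrossedModule X₁ X₂} [X.δ.range.Normal]
    {V : Type} [AddCommGroup V] [Module F V] [FiniteDimensional F V]
    (A : XRep F X V) (hA : A.IsSimple) :
    (Module.finrank F (homToVacuum A) ≠ 0 ↔
      ∃ α : F, ∀ (W : Type) (_ : AddCommGroup W) (_ : Module F W)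
        (_ : FiniteDimensional F W) (B : XRep F X W), B.IsSimple →
        LinearMap.trace F (TensorProduct F V W)
            (braidAux X B.P A.Q ∘ₗ braidAux X A.P B.Q) =
          α * (Module.finrank F W : F)) ∧
    (Module.finrank F (homToVacuum A) ≠ 0 →
      Module.finrank F (homToVacuum A) = Module.finrank F V) := by
  have hvac : Module.finrank F (homToVacuum A) ≠ 0 ↔ A.IsVacuumType := by
    refine ⟨fun h => isVacuumType_of_homToVacuum_ne_bot hA fun hbot => h ?_, fun h => ?_⟩
    · rw [hbot, finrank_bot]
    · have : Nontrivial V := hA.1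
      rw [h.finrank_homToVacuum]
      exact Module.finrank_pos.ne'
  exact ⟨hvac.trans ⟨fun h => ⟨_, fun W _ _ _ B _ => by
      rw [trace_braidAux_comp_braidAux, h.scaledS_eq B]⟩,
    fun ⟨α, hα⟩ => A.isVacuumType_of_scaledS_eq α fun U _ _ hU C hC =>
      (trace_braidAux_comp_braidAux A C).symm.trans (hα U _ _ hU C hC)⟩,
    fun h => (hvac.mp h).finrank_homToVacuum⟩

/-- The multiplicity `μ_p = dim Hom(p, V_K)` of a simple object `p` in the vacuum
object is nonzero if and only if the `p`-th row of the (normalized) `S`-matrix is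
collinear to the row of the tensor unit (whose entries are `S_{1q} = d_q/|X|`);
in that case `μ_p = d_p`. -/
theorem multiplicity_iff_collinear {F : Type} [Field F] [IsAlgClosed F] [CharZero F]
    {X₁ X₂ : Type} [Group X₁] [Group X₂] [Fintype X₁] [Fintype X₂] [DecidableEq X₂]
    {X : CrossedModule X₁ X₂} [X.δ.range.Normal]
    {V : Type} [AddCommGroup V] [Module F V] [FiniteDimensional F V]
    (A : XRep F X V) (hA : A.IsSimple) :
    (Module.finrank F (homToVacuum A) ≠ 0 ↔
      ∃ α : F, ∀ (W : Type) (_ : AddCommGroup W) (_ : Module F W)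
        (_ : FiniteDimensional F W) (B : XRep F X W), B.IsSimple →
        LinearMap.trace F (TensorProduct F V W)
            (braidAux X B.P A.Q ∘ₗ braidAux X A.P B.Q) =
          α * (Module.finrank F W : F)) ∧
    (Module.finrank F (homToVacuum A) ≠ 0 →
      Module.finrank F (homToVacuum A) = Module.finrank F V) :=
  multiplicity_iff_collinear_general A hA
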